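/- arXiv:0807.3136 — 5 statements merged into one kernel-verified Lean document; each statement's English description precedes it below -/
import Mathlib

section
/- For R > 1, the infinite product γ(R) = 2(1 - R^{-2}) ∏_{n=1}^∞ ((1 - R^{-8n})/(1 - R^{4-8n}))² converges and satisfies γ(R) > 4/3. -/
/-!
Put `s = R⁻²`. Each factor `((1 - s^(4n+4)) / (1 - s^(4n+2)))²` is `1 + O(s^(4n))`, so the
product converges. Redistributing the squared denominators over neighbouring factors gives
`2 (1 - s) ∏_{n<k} ((1 - s^(4n+4)) / (1 - s^(4n+2)))² = (1 - s^(4k+2)) γ_k`, where `γ_k` is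
`2/(1+s)` times a product of factors `(1 - s^(4n+4))² / ((1 - s^(4n+2)) (1 - s^(4n+6))) ≥ 1`.
Hence the limit `γ` satisfies `γ ≥ γ_1`, and `γ_1 > 4/3` is a polynomial inequality in `s`.
-/

open Finset Filter Real Topology

lemma multipliable_div_one_sub_sq {ι : Type*} {a b : ι → ℝ}
    (ha : Summable a) (hb : Summable b) (ha1 : ∀ i, a i < 1) (hb1 : ∀ i, b i < 1) :
    Multipliable fun i => ((1 - a i) / (1 - b i)) ^ 2 := by
  have hpos (i : ι) : 0 < (1 - a i) / (1 - b i) :=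
    div_pos (sub_pos.2 (ha1 i)) (sub_pos.2 (hb1 i))
  refine Real.multipliable_of_summable_log (fun i => pow_pos (hpos i) 2) ?_
  have hlog := ((Real.summable_log_one_add_of_summable ha.neg).sub
    (Real.summable_log_one_add_of_summable hb.neg)).mul_left 2
  refine hlog.congr fun i => ?_
  rw [Real.log_pow, Real.log_div (sub_pos.2 (ha1 i)).ne' (sub_pos.2 (hb1 i)).ne']
  simp only [← sub_eq_add_neg]
  push_cast
  ring

lemma summable_pow_mul_add {s : ℝ} (hs0 : 0 ≤ s) (hs1 : s < 1) {a : ℕ} (ha : a ≠ 0)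
    (b : ℕ) :
    Summable fun n : ℕ => s ^ (a * n + b) := by
  simp only [pow_add, pow_mul]
  exact (summable_geometric_of_lt_one (by positivity) (pow_lt_one₀ hs0 hs1 ha)).mul_right _

lemma one_sub_pow_pos {s : ℝ} (hs0 : 0 ≤ s) (hs1 : s < 1) {m : ℕ} (hm : m ≠ 0) :
    0 < 1 - s ^ m :=
  sub_pos.2 (pow_lt_one₀ hs0 hs1 hm)

lemma one_sub_mul_one_sub_le_sq {c y : ℝ} (hc : 0 ≤ c) :
    (1 - c) * (1 - c * y ^ 2) ≤ (1 - c * y) ^ 2 := by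
  nlinarith [mul_nonneg hc (sq_nonneg (1 - y))]

noncomputable def gammaFactor (s : ℝ) (n : ℕ) : ℝ :=
  (1 - s ^ (4 * n + 4)) ^ 2 / ((1 - s ^ (4 * n + 2)) * (1 - s ^ (4 * n + 6)))

/-- The partial product `γ_k(R)`, in the variable `s = R⁻²`. -/
noncomputable def gammaPartial (s : ℝ) (k : ℕ) : ℝ :=
  2 / (1 + s) * ∏ n ∈ range k, gammaFactor s n

section

variable {s : ℝ}

lemma one_le_gammaFactor (hs0 : 0 ≤ s) (hs1 : s < 1) (n : ℕ) : 1 ≤ gammaFactor s n := by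
  rw [gammaFactor, one_le_div (mul_pos (one_sub_pow_pos hs0 hs1 (by omega))
    (one_sub_pow_pos hs0 hs1 (by omega)))]
  have h := one_sub_mul_one_sub_le_sq (y := s ^ 2) (pow_nonneg hs0 (4 * n + 2))
  rwa [← pow_mul, ← pow_add, ← pow_add] at h

lemma gammaPartial_mono (hs0 : 0 ≤ s) (hs1 : s < 1) : Monotone (gammaPartial s) := by
  refine monotone_nat_of_le_succ fun k => ?_
  have hγ : 0 ≤ gammaPartial s k := mul_nonneg (by positivity)
    (prod_nonneg fun n _ => zero_le_one.trans (one_le_gammaFactor hs0 hs1 n))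
  calc gammaPartial s k
      ≤ gammaPartial s k * gammaFactor s k :=
        le_mul_of_one_le_right hγ (one_le_gammaFactor hs0 hs1 k)
    _ = gammaPartial s (k + 1) := by simp only [gammaPartial, prod_range_succ, mul_assoc]

lemma four_thirds_lt_gammaPartial_one (hs0 : 0 ≤ s) (hs1 : s < 1) : 4 / 3 < gammaPartial s 1 := by
  have h2 := one_sub_pow_pos hs0 hs1 two_ne_zero
  have h6 := one_sub_pow_pos hs0 hs1 (m := 6) (by norm_num)
  simp only [gammaPartial, gammaFactor, prod_range_one, Nat.mul_zero, Nat.zero_add]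
  rw [div_mul_div_comm, lt_div_iff₀ (by positivity)]
  have hfactor : 3 * (1 - s ^ 4) ^ 2 - 2 * ((1 + s) * ((1 - s ^ 2) * (1 - s ^ 6))) =
      (1 - s ^ 2) ^ 2 * (1 - s) * (2 * s ^ 4 + s ^ 3 + 3 * s ^ 2 - s + 1) := by
    ring
  have hquartic : 0 < 2 * s ^ 4 + s ^ 3 + 3 * s ^ 2 - s + 1 := by
    nlinarith [sq_nonneg (s - 1 / 6)]
  linarith [hfactor, mul_pos (mul_pos (pow_pos h2 2) (sub_pos.2 hs1)) hquartic]

lemma partialProd_eq_mul_gammaPartial (hs0 : 0 ≤ s) (hs1 : s < 1) (k : ℕ) :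
    2 * (1 - s) * ∏ n ∈ range k, ((1 - s ^ (4 * n + 4)) / (1 - s ^ (4 * n + 2))) ^ 2 =
      (1 - s ^ (4 * k + 2)) * gammaPartial s k := by
  induction k with
  | zero =>
    have : 1 + s ≠ 0 := by positivity
    simp only [gammaPartial, prod_range_zero]
    field_simp
    ring
  | succ k ih =>
    have h2 := one_sub_pow_pos hs0 hs1 (m := 4 * k + 2) (by omega)
    have h6 := one_sub_pow_pos hs0 hs1 (m := 4 * k + 6) (by omega)
    rw [prod_range_succ, ← mul_assoc, ih, gammaPartial, gammaPartial, prod_range_succ,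
      gammaFactor]
    field_simp
    ring

lemma multipliable_gamma (hs0 : 0 ≤ s) (hs1 : s < 1) :
    Multipliable fun n : ℕ => ((1 - s ^ (4 * n + 4)) / (1 - s ^ (4 * n + 2))) ^ 2 :=
  multipliable_div_one_sub_sq (summable_pow_mul_add hs0 hs1 four_ne_zero 4)
    (summable_pow_mul_add hs0 hs1 four_ne_zero 2)
    (fun _ => pow_lt_one₀ hs0 hs1 (by omega)) (fun _ => pow_lt_one₀ hs0 hs1 (by omega))

lemma four_thirds_lt_gamma (hs0 : 0 ≤ s) (hs1 : s < 1) :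
    4 / 3 < 2 * (1 - s) * ∏' n : ℕ, ((1 - s ^ (4 * n + 4)) / (1 - s ^ (4 * n + 2))) ^ 2 := by
  have hpartial := (multipliable_gamma hs0 hs1).hasProd.tendsto_prod_nat.const_mul (2 * (1 - s))
  have hlower : Tendsto (fun k : ℕ => (1 - s ^ (4 * k + 2)) * gammaPartial s 1) atTop
      (𝓝 (gammaPartial s 1)) := by
    have hpow : Tendsto (fun k : ℕ => s ^ (4 * k + 2)) atTop (𝓝 0) :=
      (tendsto_pow_atTop_nhds_zero_of_lt_one hs0 hs1).comp
        (tendsto_atTop_mono (fun k : ℕ => (by omega : k ≤ 4 * k + 2)) tendsto_id)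
    simpa using (hpow.const_sub 1).mul_const (gammaPartial s 1)
  refine (four_thirds_lt_gammaPartial_one hs0 hs1).trans_le
    (le_of_tendsto_of_tendsto hlower hpartial (eventually_atTop.2 ⟨1, fun k hk => ?_⟩))
  dsimp only
  rw [partialProd_eq_mul_gammaPartial hs0 hs1]
  exact mul_le_mul_of_nonneg_left (gammaPartial_mono hs0 hs1 hk)
    (one_sub_pow_pos hs0 hs1 (by omega)).le

end

/-- For `R > 1`, the infinite product
`γ(R) = 2(1 - R⁻²) ∏_{n=1}^∞ ((1 - R^{-8n})/(1 - R^{4-8n}))²`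
converges and satisfies `γ(R) > 4/3`. -/
theorem stmt_3 (R : ℝ) (hR : 1 < R) :
    Multipliable (fun n : ℕ =>
        ((1 - R ^ (-(8 : ℤ) * (n + 1))) / (1 - R ^ ((4 : ℤ) - 8 * (n + 1)))) ^ 2) ∧
      4 / 3 < 2 * (1 - R ^ (-2 : ℤ)) *
        ∏' n : ℕ,
          ((1 - R ^ (-(8 : ℤ) * (n + 1))) / (1 - R ^ ((4 : ℤ) - 8 * (n + 1)))) ^ 2 := by
  have hs0 : 0 ≤ R ^ (-2 : ℤ) := zpow_nonneg (by linarith) _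
  have hs1 : R ^ (-2 : ℤ) < 1 := zpow_lt_one_of_neg₀ hR (by norm_num)
  have hpow (m : ℤ) (n : ℕ) (hm : m = -2 * n) : R ^ m = (R ^ (-2 : ℤ)) ^ n := by
    rw [hm, zpow_mul, zpow_natCast]
  have hterm : (fun n : ℕ =>
      ((1 - R ^ (-(8 : ℤ) * (n + 1))) / (1 - R ^ ((4 : ℤ) - 8 * (n + 1)))) ^ 2) =
      fun n : ℕ =>
        ((1 - (R ^ (-2 : ℤ)) ^ (4 * n + 4)) / (1 - (R ^ (-2 : ℤ)) ^ (4 * n + 2))) ^ 2 := by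
    funext n
    rw [hpow (-8 * (n + 1)) (4 * n + 4) (by push_cast; ring),
      hpow (4 - 8 * (n + 1)) (4 * n + 2) (by push_cast; ring)]
  rw [hterm]
  exact ⟨multipliable_gamma hs0 hs1, four_thirds_lt_gamma hs0 hs1⟩
end

section
/- lim_{R→1⁺} 2(1 - R^{-2}) ∏_{n=1}^∞ ((1 - R^{-8n})/(1 - R^{4-8n}))² = ∏_{n=1}^∞ 4n²/(4n²-1) = π/2. -/
/-!
Put `q = R⁻²`. The factor `((1 - q^{4n+4}) / (1 - q^{4n+2}))²` splits as the q-Wallis factor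
`(1 - q^{4n+4})² / ((1 - q^{4n+2})(1 - q^{4n+6}))` times the telescoping factor
`(1 - q^{4n+6}) / (1 - q^{4n+2})`, whose product is `1 / (1 - q²)`; hence the expression equals
`2 / (1 + q)` times the product of the q-Wallis factors. Dividing out `1 - q` makes each q-Wallis
factor a ratio of q-integers `[m] = 1 + q + ⋯ + q^{m-1}`, continuous at `q = 1` where it is the
Wallis factor `4(n+1)² / (4(n+1)² - 1)`, and the identity `[m+2]² = [m][m+4] + qᵐ(1+q)²` bounds
its logarithm between `0` and `1/(n+1)²` for `0 ≤ q ≤ 1`. Dominated convergence then lets `q → 1⁻` inside the product, and Wallis' formula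
evaluates the limit.
-/

open Filter Real Finset Topology

theorem Real.hasProd_of_tendsto_prod_of_one_le {f : ℕ → ℝ} {a : ℝ} (hf : ∀ n, 1 ≤ f n)
    (h : Tendsto (fun N ↦ ∏ i ∈ range N, f i) atTop (𝓝 a)) : HasProd f a := by
  have hf0 (n : ℕ) : 0 < f n := one_pos.trans_le (hf n)
  have ha : 0 < a := one_pos.trans_le <| ge_of_tendsto' h fun N ↦ one_le_prod fun i _ ↦ hf i
  have hlog : HasSum (fun n ↦ log (f n)) (log a) := by
    rw [hasSum_iff_tendsto_nat_of_nonneg fun n ↦ log_nonneg (hf n)]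
    refine ((continuousAt_log ha.ne').tendsto.comp h).congr fun N ↦ ?_
    exact log_prod fun i _ ↦ (hf0 i).ne'
  simpa [exp_log ha] using hasProd_of_hasSum_log hf0 hlog

theorem Finset.prod_range_div_of_ne_zero {K : Type*} [Field K] {x : ℕ → K} (hx : ∀ n, x n ≠ 0)
    (N : ℕ) : ∏ i ∈ range N, x (i + 1) / x i = x N / x 0 := by
  induction N with
  | zero => simp [hx 0]
  | succ N ih => rw [prod_range_succ, ih]; field_simp [hx N]

theorem hasProd_succ_div_of_monotone {x : ℕ → ℝ} {a : ℝ} (hx : ∀ n, 0 < x n) (hmono : Monotone x)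
    (h : Tendsto x atTop (𝓝 a)) : HasProd (fun n ↦ x (n + 1) / x n) (a / x 0) := by
  refine Real.hasProd_of_tendsto_prod_of_one_le (fun n ↦ ?_) ?_
  · exact (one_le_div (hx n)).2 (hmono n.le_succ)
  · simp_rw [prod_range_div_of_ne_zero fun n ↦ (hx n).ne']
    exact h.div_const _

theorem geom_sum_sq_eq_mul_add {R : Type*} [CommRing R] (x : R) (m : ℕ) :
    (∑ i ∈ range (m + 2), x ^ i) ^ 2 =
      (∑ i ∈ range m, x ^ i) * ∑ i ∈ range (m + 4), x ^ i + x ^ m * (1 + x) ^ 2 := by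
  simp only [sum_range_succ]
  linear_combination x ^ m * (1 + x) ^ 2 * mul_neg_geom_sum x m

theorem pow_mul_le_geom_sum {x : ℝ} (h0 : 0 ≤ x) (h1 : x ≤ 1) {j m : ℕ} (hjm : j < m) :
    (j + 1) * x ^ j ≤ ∑ i ∈ range m, x ^ i :=
  calc (j + 1) * x ^ j = ∑ _i ∈ range (j + 1), x ^ j := by simp
    _ ≤ ∑ i ∈ range (j + 1), x ^ i :=
      sum_le_sum fun i hi ↦ pow_le_pow_of_le_one h0 h1 (Nat.lt_succ_iff.1 (mem_range.1 hi))
    _ ≤ ∑ i ∈ range m, x ^ i :=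
      sum_le_sum_of_subset_of_nonneg (range_subset_range.2 hjm) fun i _ _ ↦ pow_nonneg h0 i

-- `(1 - q^{4n+4})² / ((1 - q^{4n+2})(1 - q^{4n+6}))` with the factors `1 - q` cancelled,
-- so that it is defined and continuous at `q = 1`.
noncomputable def qWallisFactor (n : ℕ) (q : ℝ) : ℝ :=
  (∑ i ∈ range (4 * n + 4), q ^ i) ^ 2 /
    ((∑ i ∈ range (4 * n + 2), q ^ i) * ∑ i ∈ range (4 * n + 6), q ^ i)

theorem qWallisFactor_one (n : ℕ) :
    qWallisFactor n 1 = 4 * ((n : ℝ) + 1) ^ 2 / (4 * ((n : ℝ) + 1) ^ 2 - 1) := by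
  have h : (4 : ℝ) * (n + 1) ^ 2 - 1 = (4 * n + 2) * (4 * n + 6) / 4 := by ring
  rw [qWallisFactor, h]
  push_cast [one_geom_sum]
  field_simp

theorem continuousAt_qWallisFactor (n : ℕ) : ContinuousAt (qWallisFactor n) 1 := by
  refine ContinuousAt.div (by fun_prop) (by fun_prop) ?_
  push_cast [one_geom_sum]
  positivity

theorem qWallisFactor_sub_one {q : ℝ} (hq : 0 ≤ q) (n : ℕ) :
    qWallisFactor n q - 1 =
      q ^ (4 * n + 2) * (1 + q) ^ 2 /
        ((∑ i ∈ range (4 * n + 2), q ^ i) * ∑ i ∈ range (4 * n + 6), q ^ i) := by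
  have h2 := geom_sum_pos hq (n := 4 * n + 2) (by omega)
  have h6 := geom_sum_pos hq (n := 4 * n + 6) (by omega)
  rw [qWallisFactor, geom_sum_sq_eq_mul_add q (4 * n + 2)]
  field_simp
  ring

theorem one_le_qWallisFactor {q : ℝ} (hq : 0 ≤ q) (n : ℕ) : 1 ≤ qWallisFactor n q :=
  sub_nonneg.1 <| qWallisFactor_sub_one hq n ▸ by positivity

theorem qWallisFactor_pos {q : ℝ} (hq : 0 ≤ q) (n : ℕ) : 0 < qWallisFactor n q :=
  one_pos.trans_le (one_le_qWallisFactor hq n)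

theorem qWallisFactor_le {q : ℝ} (h0 : 0 ≤ q) (h1 : q ≤ 1) (n : ℕ) :
    qWallisFactor n q ≤ 1 + 1 / ((n : ℝ) + 1) ^ 2 := by
  -- both q-integers in the denominator have at least `2n + 2` terms `≥ q^{2n+1}`
  have h2 := pow_mul_le_geom_sum h0 h1 (j := 2 * n + 1) (m := 4 * n + 2) (by omega)
  have h6 := pow_mul_le_geom_sum h0 h1 (j := 2 * n + 1) (m := 4 * n + 6) (by omega)
  set p := q ^ (2 * n + 1)
  have hp : q ^ (4 * n + 2) = p * p := by rw [← pow_add]; ring_nf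
  have hc : ((2 * n + 1 : ℕ) + 1 : ℝ) = 2 * (n + 1) := by push_cast; ring
  rw [hc] at h2 h6
  have hG : 4 * ((n : ℝ) + 1) ^ 2 * (p * p) ≤
      (∑ i ∈ range (4 * n + 2), q ^ i) * ∑ i ∈ range (4 * n + 6), q ^ i := by
    have : 0 ≤ p := by positivity
    nlinarith [mul_le_mul h2 h6 (by positivity) (by positivity)]
  have hq : (1 + q) ^ 2 ≤ 4 := by nlinarith
  rw [← sub_le_iff_le_add', qWallisFactor_sub_one h0 n, hp,
    div_le_div_iff₀ (mul_pos (geom_sum_pos h0 (by omega)) (geom_sum_pos h0 (by omega)))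
      (by positivity)]
  nlinarith [mul_nonneg (mul_self_nonneg p) (sq_nonneg ((n : ℝ) + 1))]

theorem abs_log_qWallisFactor_le {q : ℝ} (h0 : 0 ≤ q) (h1 : q ≤ 1) (n : ℕ) :
    |log (qWallisFactor n q)| ≤ 1 / ((n : ℝ) + 1) ^ 2 := by
  rw [abs_of_nonneg (log_nonneg (one_le_qWallisFactor h0 n))]
  linarith [log_le_sub_one_of_pos (qWallisFactor_pos h0 n), qWallisFactor_le h0 h1 n]

theorem summable_one_div_nat_add_one_sq : Summable fun n : ℕ ↦ 1 / ((n : ℝ) + 1) ^ 2 := by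
  exact_mod_cast (summable_nat_add_iff 1).2 (summable_one_div_nat_pow.2 one_lt_two)

theorem summable_log_qWallisFactor {q : ℝ} (h0 : 0 ≤ q) (h1 : q ≤ 1) :
    Summable fun n ↦ log (qWallisFactor n q) :=
  summable_one_div_nat_add_one_sq.of_norm_bounded (abs_log_qWallisFactor_le h0 h1)

theorem multipliable_qWallisFactor {q : ℝ} (h0 : 0 ≤ q) (h1 : q ≤ 1) :
    Multipliable fun n ↦ qWallisFactor n q :=
  multipliable_of_summable_log (qWallisFactor_pos h0) (summable_log_qWallisFactor h0 h1)

theorem tendsto_tprod_qWallisFactor :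
    Tendsto (fun q ↦ ∏' n, qWallisFactor n q) (𝓝[<] 1) (𝓝 (∏' n, qWallisFactor n 1)) := by
  have hunit : ∀ᶠ q in 𝓝[<] (1 : ℝ), q ∈ Set.Icc 0 1 :=
    mem_of_superset (Ioo_mem_nhdsLT zero_lt_one) Set.Ioo_subset_Icc_self
  have hlog := tendsto_tsum_of_dominated_convergence summable_one_div_nat_add_one_sq
    (fun n ↦ ((continuousAt_qWallisFactor n).log (qWallisFactor_pos zero_le_one n).ne').tendsto
      |>.mono_left nhdsWithin_le_nhds)
    (hunit.mono fun q hq n ↦ abs_log_qWallisFactor_le hq.1 hq.2 n)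
  have h_eq {q : ℝ} (hq : q ∈ Set.Icc (0 : ℝ) 1) :
      rexp (∑' n, log (qWallisFactor n q)) = ∏' n, qWallisFactor n q :=
    rexp_tsum_eq_tprod (qWallisFactor_pos hq.1) (summable_log_qWallisFactor hq.1 hq.2)
  rw [← h_eq ⟨zero_le_one, le_rfl⟩]
  exact hlog.rexp.congr' (hunit.mono fun q hq ↦ h_eq hq)

theorem hasProd_wallis :
    HasProd (fun n : ℕ ↦ 4 * ((n : ℝ) + 1) ^ 2 / (4 * ((n : ℝ) + 1) ^ 2 - 1)) (π / 2) := by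
  refine Real.hasProd_of_tendsto_prod_of_one_le
    (fun n ↦ qWallisFactor_one n ▸ one_le_qWallisFactor zero_le_one n) ?_
  refine Real.tendsto_prod_pi_div_two.congr fun N ↦ prod_congr rfl fun i _ ↦ ?_
  have : (4 : ℝ) * (i + 1) ^ 2 - 1 = (2 * i + 1) * (2 * i + 3) := by ring
  rw [this]
  field_simp
  ring

theorem hasProd_one_sub_pow_ratio {q : ℝ} (h0 : 0 ≤ q) (h1 : q < 1) :
    HasProd (fun n : ℕ ↦ (1 - q ^ (4 * n + 6)) / (1 - q ^ (4 * n + 2))) (1 - q ^ 2)⁻¹ := by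
  have hpos (n : ℕ) : 0 < 1 - q ^ (4 * n + 2) := sub_pos.2 (pow_lt_one₀ h0 h1 (by omega))
  have hmono : Monotone fun n : ℕ ↦ 1 - q ^ (4 * n + 2) := fun m n hmn ↦
    sub_le_sub_left (pow_le_pow_of_le_one h0 h1.le (by omega)) 1
  have hlim : Tendsto (fun n : ℕ ↦ 1 - q ^ (4 * n + 2)) atTop (𝓝 1) := by
    have := (tendsto_pow_atTop_nhds_zero_of_lt_one h0 h1).comp
      (tendsto_atTop_mono (fun n ↦ by omega : ∀ n : ℕ, n ≤ 4 * n + 2) tendsto_id)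
    simpa using this.const_sub 1
  simpa [one_div, mul_add, add_assoc] using hasProd_succ_div_of_monotone hpos hmono hlim

theorem one_sub_pow_ratio_sq_eq {q : ℝ} (h0 : 0 ≤ q) (h1 : q < 1) (n : ℕ) :
    ((1 - q ^ (4 * n + 4)) / (1 - q ^ (4 * n + 2))) ^ 2 =
      qWallisFactor n q * ((1 - q ^ (4 * n + 6)) / (1 - q ^ (4 * n + 2))) := by
  have hq : 1 - q ≠ 0 := sub_ne_zero.2 h1.ne'
  have h2 := (geom_sum_pos h0 (n := 4 * n + 2) (by omega)).ne'
  have h6 := (geom_sum_pos h0 (n := 4 * n + 6) (by omega)).ne'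
  rw [qWallisFactor, ← mul_neg_geom_sum q (4 * n + 4), ← mul_neg_geom_sum q (4 * n + 2),
    ← mul_neg_geom_sum q (4 * n + 6)]
  field_simp

theorem tprod_one_sub_pow_ratio_sq {q : ℝ} (h0 : 0 ≤ q) (h1 : q < 1) :
    ∏' n : ℕ, ((1 - q ^ (4 * n + 4)) / (1 - q ^ (4 * n + 2))) ^ 2 =
      (∏' n, qWallisFactor n q) / (1 - q ^ 2) := by
  simp_rw [one_sub_pow_ratio_sq_eq h0 h1]
  exact ((multipliable_qWallisFactor h0 h1.le).hasProd.mul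
    (hasProd_one_sub_pow_ratio h0 h1)).tprod_eq

theorem tendsto_two_mul_tprod_qWallisFactor_div :
    Tendsto (fun q ↦ 2 * (∏' n, qWallisFactor n q) / (1 + q)) (𝓝[<] 1) (𝓝 (π / 2)) := by
  have hπ : ∏' n, qWallisFactor n 1 = π / 2 := by
    simpa only [qWallisFactor_one] using hasProd_wallis.tprod_eq
  have hden : Tendsto (fun q : ℝ ↦ 1 + q) (𝓝[<] 1) (𝓝 2) := by
    simpa [one_add_one_eq_two] using ((continuous_const_add (1 : ℝ)).tendsto 1).mono_left
      nhdsWithin_le_nhds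
  have := (tendsto_tprod_qWallisFactor.const_mul 2).div hden two_ne_zero
  rwa [hπ, mul_div_cancel_left₀ _ two_ne_zero] at this

theorem tendsto_zpow_neg_two_nhdsGT_one :
    Tendsto (fun R : ℝ ↦ R ^ (-2 : ℤ)) (𝓝[>] 1) (𝓝[<] 1) := by
  refine tendsto_nhdsWithin_iff.2 ⟨?_, eventually_nhdsWithin_of_forall fun R (hR : 1 < R) ↦
    show R ^ (-2 : ℤ) < 1 from zpow_lt_one_of_neg₀ hR (by norm_num)⟩
  simpa using tendsto_nhdsWithin_of_tendsto_nhds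
    (continuousAt_zpow₀ (1 : ℝ) (-2) (Or.inl one_ne_zero)).tendsto

theorem two_mul_one_sub_zpow_mul_tprod_eq {R : ℝ} (hR : 1 < R) :
    2 * (1 - R ^ (-2 : ℤ)) *
        ∏' n : ℕ, ((1 - R ^ (-(8 : ℤ) * (n + 1))) / (1 - R ^ ((4 : ℤ) - 8 * (n + 1)))) ^ 2 =
      2 * (∏' n, qWallisFactor n (R ^ (-2 : ℤ))) / (1 + R ^ (-2 : ℤ)) := by
  have hpow (k : ℕ) {z : ℤ} (hz : z = -2 * k) : R ^ z = (R ^ (-2 : ℤ)) ^ k := by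
    rw [hz, zpow_mul, zpow_natCast]
  have h4 (n : ℕ) : R ^ (-(8 : ℤ) * (n + 1)) = (R ^ (-2 : ℤ)) ^ (4 * n + 4) :=
    hpow _ (by push_cast; ring)
  have h2 (n : ℕ) : R ^ ((4 : ℤ) - 8 * (n + 1)) = (R ^ (-2 : ℤ)) ^ (4 * n + 2) :=
    hpow _ (by push_cast; ring)
  have hq0 : 0 ≤ R ^ (-2 : ℤ) := zpow_nonneg (zero_le_one.trans hR.le) _
  have hq1 : R ^ (-2 : ℤ) < 1 := zpow_lt_one_of_neg₀ hR (by norm_num)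
  simp only [h4, h2, tprod_one_sub_pow_ratio_sq hq0 hq1]
  generalize R ^ (-2 : ℤ) = q at hq0 hq1 ⊢
  rw [show 1 - q ^ 2 = (1 - q) * (1 + q) by ring]
  field_simp [(sub_pos.2 hq1).ne']

/-- As `R → 1⁺`, `2(1 - R⁻²) ∏_{n=1}^∞ ((1 - R^{-8n})/(1 - R^{4-8n}))²` tends to
the Wallis product `∏_{n=1}^∞ 4n²/(4n²-1) = π/2`. -/
theorem stmt_4 :
    Tendsto (fun R : ℝ =>
        2 * (1 - R ^ (-2 : ℤ)) *
          ∏' n : ℕ,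
            ((1 - R ^ (-(8 : ℤ) * (n + 1))) / (1 - R ^ ((4 : ℤ) - 8 * (n + 1)))) ^ 2)
        (nhdsWithin 1 (Set.Ioi 1)) (nhds (π / 2)) ∧
      (∏' n : ℕ, (4 * ((n : ℝ) + 1) ^ 2) / (4 * ((n : ℝ) + 1) ^ 2 - 1)) = π / 2 :=
  ⟨(tendsto_two_mul_tprod_qWallisFactor_div.comp tendsto_zpow_neg_two_nhdsGT_one).congr'
    (eventually_nhdsWithin_of_forall fun _ hR ↦ (two_mul_one_sub_zpow_mul_tprod_eq hR).symm),
    hasProd_wallis.tprod_eq⟩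
end

section
/- For θ ∈ (0, π/2], the integral h(1,θ) = (sin 2θ/π) ∫₀^∞ dx / (x² sin²θ + 2x cos 2θ + 1) satisfies h(1,θ) ≤ h(1, π/2) = 2/√3. Moreover for any z > 0, (sin 2θ/π) ∫₀^∞ dx/(x² sin²θ / z + 2x cos 2θ + z) equals h(1,θ), i.e. the integral is independent of z. -/
/-!
Substituting `x = t / sin θ` gives `h(θ) = (2 cos θ / π) J(cos 2θ / sin θ)` with
`J(β) = ∫₀^∞ dt / (t² + 2βt + 1)`, and an arctan antiderivative gives
`J(β) = arccos β / √(1 - β²)` for `|β| < 1`. If `cos 2θ ≥ 0` then `J ≤ J(0) = π/2`, so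
`h(θ) ≤ cos θ`. Otherwise Jordan's inequality `sin u ≥ 2u/π` yields
`arccos β ≤ π √((1 - β)/2)`, hence `h(θ) ≤ 2 cos θ / √(2(1 + β)) ≤ 2/√3`. Close to `π/2`,
`h(θ) = (2/π) arccos (cos 2θ / sin θ) · sin θ / √(4 sin² θ - 1)`, which is continuous at `π/2`
with value `2/√3`. Independence of `z` is the substitution `x ↦ z x`.
-/

open Real Filter MeasureTheory Set Topology

noncomputable def invQuadIntegral (β : ℝ) : ℝ :=
  ∫ t in Ioi (0 : ℝ), (t ^ 2 + 2 * β * t + 1)⁻¹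

section invQuadIntegral

variable {β : ℝ}

lemma quad_pos_of_sq_lt_one (hβ : β ^ 2 < 1) (t : ℝ) : 0 < t ^ 2 + 2 * β * t + 1 := by
  nlinarith [sq_nonneg (t + β)]

lemma hasDerivAt_arctan_quad (hβ : β ^ 2 < 1) (t : ℝ) :
    HasDerivAt (fun t => arctan ((t + β) / √(1 - β ^ 2)) / √(1 - β ^ 2))
      (t ^ 2 + 2 * β * t + 1)⁻¹ t := by
  have hd : 0 < 1 - β ^ 2 := by linarith
  have hs : 0 < √(1 - β ^ 2) := sqrt_pos.mpr hd
  have hinner : HasDerivAt (fun t => (t + β) / √(1 - β ^ 2)) (1 / √(1 - β ^ 2)) t :=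
    ((hasDerivAt_id t).add_const β).div_const _
  refine (((hasDerivAt_arctan _).comp t hinner).div_const _).congr_deriv ?_
  have := quad_pos_of_sq_lt_one hβ t
  field_simp
  rw [sq_sqrt hd.le, eq_div_iff (by nlinarith)]
  ring

lemma tendsto_arctan_quad_atTop (hβ : β ^ 2 < 1) :
    Tendsto (fun t => arctan ((t + β) / √(1 - β ^ 2)) / √(1 - β ^ 2)) atTop
      (𝓝 (π / 2 / √(1 - β ^ 2))) := by
  have hinner : Tendsto (fun t => (t + β) / √(1 - β ^ 2)) atTop atTop :=
    (tendsto_atTop_add_const_right _ β tendsto_id).atTop_div_const (sqrt_pos.mpr (by linarith))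
  exact ((tendsto_arctan_atTop.mono_right nhdsWithin_le_nhds).comp hinner).div_const _

theorem invQuadIntegral_eq_arccos (hβ : β ^ 2 < 1) :
    invQuadIntegral β = arccos β / √(1 - β ^ 2) := by
  have hβ' : β ∈ Ioo (-1) 1 := by constructor <;> nlinarith
  rw [invQuadIntegral, integral_Ioi_of_hasDerivAt_of_nonneg'
      (fun t _ => hasDerivAt_arctan_quad hβ t)
      (fun t _ => inv_nonneg.mpr (quad_pos_of_sq_lt_one hβ t).le) (tendsto_arctan_quad_atTop hβ),
    arccos_eq_pi_div_two_sub_arcsin, arcsin_eq_arctan hβ', zero_add, sub_div]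

theorem invQuadIntegral_le_pi_div_two (hβ : 0 ≤ β) : invQuadIntegral β ≤ π / 2 := by
  have hpos : ∀ t ∈ Ioi (0 : ℝ), 0 < t ^ 2 + 2 * β * t + 1 := fun t (ht : 0 < t) => by positivity
  calc invQuadIntegral β ≤ ∫ t in Ioi (0 : ℝ), (1 + t ^ 2)⁻¹ := by
        refine integral_mono_of_nonneg ?_ integrable_inv_one_add_sq.integrableOn ?_
        · exact ae_restrict_of_forall_mem measurableSet_Ioi fun t ht =>
            inv_nonneg.mpr (hpos t ht).le
        · refine ae_restrict_of_forall_mem measurableSet_Ioi fun t (ht : 0 < t) => ?_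
          exact inv_anti₀ (by positivity) (by nlinarith)
    _ = π / 2 := by rw [integral_Ioi_inv_one_add_sq, arctan_zero, sub_zero]

theorem arccos_le_pi_mul_sqrt {y : ℝ} (h₁ : -1 ≤ y) (h₂ : y ≤ 1) :
    arccos y ≤ π * √((1 - y) / 2) := by
  set t := √((1 - y) / 2)
  have ht₀ : 0 ≤ t := sqrt_nonneg _
  have ht : t ^ 2 = (1 - y) / 2 := sq_sqrt (by linarith)
  have ht₁ : t ≤ 1 := by nlinarith
  have harccos : arccos y = 2 * arcsin t := by
    have : cos (2 * arcsin t) = y := by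
      rw [cos_two_mul, cos_arcsin, sq_sqrt (by nlinarith)]
      linarith
    rw [← this, arccos_cos (by linarith [arcsin_nonneg.mpr ht₀])
      (by linarith [arcsin_le_pi_div_two t])]
  have hjordan := mul_le_sin (arcsin_nonneg.mpr ht₀) (arcsin_le_pi_div_two t)
  rw [sin_arcsin (by linarith) ht₁] at hjordan
  rw [harccos]
  have := pi_pos
  rw [div_mul_eq_mul_div, div_le_iff₀ this] at hjordan
  linarith

theorem invQuadIntegral_le_pi_div_sqrt (h₁ : -1 < β) (h₂ : β < 1) :
    invQuadIntegral β ≤ π / √(2 * (1 + β)) := by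
  have hβ : β ^ 2 < 1 := by nlinarith
  have hm : 0 < √((1 - β) / 2) := sqrt_pos.mpr (by linarith)
  have hsplit : √(1 - β ^ 2) = √(2 * (1 + β)) * √((1 - β) / 2) := by
    rw [← sqrt_mul (by linarith)]; ring_nf
  rw [invQuadIntegral_eq_arccos hβ, hsplit, div_mul_eq_div_div_swap]
  gcongr
  exact (div_le_iff₀ hm).mpr (arccos_le_pi_mul_sqrt h₁.le h₂.le)

end invQuadIntegral

theorem integral_Ioi_inv_quad_eq_invQuadIntegral (b : ℝ) {a : ℝ} (ha : 0 < a) :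
    ∫ x in Ioi (0 : ℝ), (x ^ 2 * a ^ 2 + 2 * x * b + 1)⁻¹ = a⁻¹ * invQuadIntegral (b / a) := by
  have := integral_comp_mul_left_Ioi (fun t => (t ^ 2 + 2 * (b / a) * t + 1)⁻¹) 0 ha
  rw [mul_zero, smul_eq_mul] at this
  rw [invQuadIntegral, ← this]
  congr with x
  field_simp

theorem integral_Ioi_inv_quad_rescale (a b : ℝ) {z : ℝ} (hz : 0 < z) :
    ∫ x in Ioi (0 : ℝ), (x ^ 2 * a / z + 2 * x * b + z)⁻¹ =
      ∫ x in Ioi (0 : ℝ), (x ^ 2 * a + 2 * x * b + 1)⁻¹ := by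
  have := integral_comp_mul_left_Ioi (fun x => (x ^ 2 * a + 2 * x * b + 1)⁻¹) 0 (inv_pos.mpr hz)
  rw [mul_zero, smul_eq_mul, inv_inv] at this
  calc ∫ x in Ioi (0 : ℝ), (x ^ 2 * a / z + 2 * x * b + z)⁻¹
      = ∫ x in Ioi (0 : ℝ), z⁻¹ * ((z⁻¹ * x) ^ 2 * a + 2 * (z⁻¹ * x) * b + 1)⁻¹ := by
        congr with x
        rw [← mul_inv]
        field_simp
    _ = ∫ x in Ioi (0 : ℝ), (x ^ 2 * a + 2 * x * b + 1)⁻¹ := by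
        rw [integral_const_mul, this, inv_mul_cancel_left₀ hz.ne']

section angle

variable {θ : ℝ}

lemma sin_two_mul_div_pi_mul_integral_eq (hs : 0 < sin θ) :
    sin (2 * θ) / π * ∫ x in Ioi (0 : ℝ), (x ^ 2 * sin θ ^ 2 + 2 * x * cos (2 * θ) + 1)⁻¹ =
      2 * cos θ / π * invQuadIntegral (cos (2 * θ) / sin θ) := by
  rw [integral_Ioi_inv_quad_eq_invQuadIntegral _ hs, sin_two_mul]
  field_simp

theorem two_mul_cos_div_pi_mul_invQuadIntegral_le (hθ : θ ∈ Ioo 0 (π / 2)) :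
    2 * cos θ / π * invQuadIntegral (cos (2 * θ) / sin θ) ≤ 2 / √3 := by
  obtain ⟨hθ₀, hθ₁⟩ := hθ
  have hs : 0 < sin θ := sin_pos_of_pos_of_lt_pi hθ₀ (by linarith [pi_pos])
  have hc : 0 < cos θ := cos_pos_of_mem_Ioo ⟨by linarith, hθ₁⟩
  have hs₁ : sin θ < 1 := by nlinarith [sin_sq_add_cos_sq θ]
  have hcos₂ := cos_two_mul_eq_one_sub θ
  have h3 : 0 < √3 := by positivity
  set β := cos (2 * θ) / sin θ with hβ_def
  rcases le_or_gt 0 β with hβ | hβ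
  · calc 2 * cos θ / π * invQuadIntegral β ≤ 2 * cos θ / π * (π / 2) := by
          gcongr; exact invQuadIntegral_le_pi_div_two hβ
      _ = cos θ := by field_simp
      _ ≤ 2 / √3 := by
          rw [le_div_iff₀ h3]
          nlinarith [cos_le_one θ, sq_sqrt (show (0 : ℝ) ≤ 3 by norm_num)]
  · have hβ₁ : -1 < β := by rw [hβ_def, lt_div_iff₀ hs]; nlinarith
    have hβ₂ : 0 < 1 + β := by linarith
    -- `2 (1 + β) - 3 cos² θ = (1 - sin θ)² (2 + 3 sin θ) / sin θ`
    have key : 3 * cos θ ^ 2 ≤ 2 * (1 + β) := by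
      rw [show 2 * (1 + β) = 2 * (sin θ + cos (2 * θ)) / sin θ by rw [hβ_def]; field_simp,
        le_div_iff₀ hs, cos_sq', hcos₂]
      nlinarith [mul_nonneg (sq_nonneg (1 - sin θ)) (show 0 ≤ 2 + 3 * sin θ by linarith)]
    have hsqrt : cos θ * √3 ≤ √(2 * (1 + β)) := by
      rw [le_sqrt (by positivity) (by positivity), mul_pow, sq_sqrt (by norm_num)]
      linarith
    calc 2 * cos θ / π * invQuadIntegral β ≤ 2 * cos θ / π * (π / √(2 * (1 + β))) := by
          gcongr; exact invQuadIntegral_le_pi_div_sqrt hβ₁ (by linarith)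
      _ = 2 * cos θ / √(2 * (1 + β)) := by field_simp
      _ ≤ 2 / √3 := by
          rw [div_le_div_iff₀ (by positivity) h3]
          linarith

lemma cos_div_sqrt_one_sub_sq_eq (hs : 1 / 2 ≤ sin θ) (hc : 0 < cos θ) :
    cos θ / √(1 - (cos (2 * θ) / sin θ) ^ 2) = sin θ / √(4 * sin θ ^ 2 - 1) := by
  have h : 1 - (cos (2 * θ) / sin θ) ^ 2 = (cos θ / sin θ) ^ 2 * (4 * sin θ ^ 2 - 1) := by
    have : sin θ ≠ 0 := by positivity
    rw [cos_two_mul_eq_one_sub, div_pow, div_pow, cos_sq']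
    field_simp
    ring
  rw [h, sqrt_mul' _ (by nlinarith), sqrt_sq (by positivity)]
  field_simp

lemma two_mul_cos_div_pi_mul_invQuadIntegral_eq (hs : 1 / 2 < sin θ) (hc : 0 < cos θ) :
    2 * cos θ / π * invQuadIntegral (cos (2 * θ) / sin θ) =
      2 / π * (sin θ / √(4 * sin θ ^ 2 - 1)) * arccos (cos (2 * θ) / sin θ) := by
  have hs₁ : sin θ < 1 := by nlinarith [sin_sq_add_cos_sq θ]
  have hβ : (cos (2 * θ) / sin θ) ^ 2 < 1 := by
    rw [div_pow, div_lt_one (by positivity), cos_two_mul_eq_one_sub]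
    nlinarith [mul_pos (sub_pos.mpr hs) (sub_pos.mpr hs₁)]
  rw [invQuadIntegral_eq_arccos hβ, ← cos_div_sqrt_one_sub_sq_eq hs.le hc]
  ring

theorem tendsto_two_mul_cos_div_pi_mul_invQuadIntegral :
    Tendsto (fun θ => 2 * cos θ / π * invQuadIntegral (cos (2 * θ) / sin θ)) (𝓝[<] (π / 2))
      (𝓝 (2 / √3)) := by
  have hpi := pi_pos
  have hclosed : ContinuousAt
      (fun θ => 2 / π * (sin θ / √(4 * sin θ ^ 2 - 1)) * arccos (cos (2 * θ) / sin θ)) (π / 2) := by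
    have h3 : √(4 * sin (π / 2) ^ 2 - 1) ≠ 0 := by rw [sin_pi_div_two]; norm_num
    have h1 : sin (π / 2) ≠ 0 := by rw [sin_pi_div_two]; norm_num
    fun_prop (disch := assumption)
  have hvalue : 2 / π * (sin (π / 2) / √(4 * sin (π / 2) ^ 2 - 1)) *
      arccos (cos (2 * (π / 2)) / sin (π / 2)) = 2 / √3 := by
    rw [sin_pi_div_two, mul_div_cancel₀ _ two_ne_zero, cos_pi]
    norm_num
    field_simp
  have hsin : ∀ᶠ θ in 𝓝[<] (π / 2), 1 / 2 < sin θ :=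
    (continuous_sin.tendsto (π / 2)).eventually_const_lt (by rw [sin_pi_div_two]; norm_num)
      |>.filter_mono nhdsWithin_le_nhds
  have hcos : ∀ᶠ θ in 𝓝[<] (π / 2), 0 < cos θ := by
    filter_upwards [Ioo_mem_nhdsLT (show -(π / 2) < π / 2 by linarith)] with θ hθ
    exact cos_pos_of_mem_Ioo hθ
  rw [← hvalue]
  refine (hclosed.tendsto.mono_left nhdsWithin_le_nhds).congr' ?_
  filter_upwards [hsin, hcos] with θ hs hc
  exact (two_mul_cos_div_pi_mul_invQuadIntegral_eq hs hc).symm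

end angle

/-- For `θ ∈ (0, π/2)`, with
`h(θ) = (sin 2θ/π) ∫₀^∞ dx/(x² sin²θ + 2x cos 2θ + 1)`, one has `h(θ) ≤ 2/√3`,
the value `2/√3` being the limit as `θ → π/2` (the case `θ = π/2`), and for any
`z > 0` the integral `(sin 2θ/π) ∫₀^∞ dx/(x² sin²θ/z + 2x cos 2θ + z)` equals
`h(θ)`, i.e. it is independent of `z`. -/
theorem stmt_7 :
    let h : ℝ → ℝ := fun θ =>
      (Real.sin (2 * θ) / π) *
        ∫ x in Set.Ioi (0 : ℝ),
          (x ^ 2 * Real.sin θ ^ 2 + 2 * x * Real.cos (2 * θ) + 1)⁻¹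
    ∀ θ ∈ Set.Ioo 0 (π / 2),
      h θ ≤ 2 / Real.sqrt 3 ∧
      (∀ z : ℝ, 0 < z →
        (Real.sin (2 * θ) / π) *
            (∫ x in Set.Ioi (0 : ℝ),
              (x ^ 2 * Real.sin θ ^ 2 / z + 2 * x * Real.cos (2 * θ) + z)⁻¹) = h θ) ∧
      Tendsto h (nhdsWithin (π / 2) (Set.Iio (π / 2))) (nhds (2 / Real.sqrt 3)) := by
  intro h θ hθ
  have h_eq : ∀ θ ∈ Ioo 0 (π / 2),
      2 * cos θ / π * invQuadIntegral (cos (2 * θ) / sin θ) = h θ :=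
    fun θ hθ => (sin_two_mul_div_pi_mul_integral_eq
      (sin_pos_of_pos_of_lt_pi hθ.1 (hθ.2.trans (half_lt_self pi_pos)))).symm
  refine ⟨?_, fun z hz => by rw [integral_Ioi_inv_quad_rescale _ _ hz], ?_⟩
  · exact h_eq θ hθ ▸ two_mul_cos_div_pi_mul_invQuadIntegral_le hθ
  · refine tendsto_two_mul_cos_div_pi_mul_invQuadIntegral.congr' ?_
    filter_upwards [Ioo_mem_nhdsLT (half_pos pi_pos)] using h_eq
end

section
/- Let E be a measurable subset of ℂ, m a complex measure on E with |dm| ≤ dn for a finite positive measure n, and M : E → L(H) a bounded continuous function with M(σ) self-adjoint and positive for each σ ∈ E. Then for every k and every k×k matrix (f_{ij}) of bounded measurable functions on E, ‖∫_E (f_{ij}(σ)) ⊗ M(σ) dm(σ)‖ ≤ sup_{σ∈E} ‖(f_{ij}(σ))‖ · ‖∫_E M(σ) dn(σ)‖; i.e., the map f ↦ ∫_E f(σ) M(σ) dm(σ) is completely bounded with cb-norm at most ‖∫_E M dn‖. -/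
/-!
Writing the positive operator `T` as `star R * R` turns `∑ F i j ⟪T u j, v i⟫` into
`∑ F i j ⟪R u j, R v i⟫`, and expanding the inner products in an orthonormal basis of the span
of the `R u j`, `R v i` rewrites this as a sum of matrix elements of `F` between coordinate
vectors, whence the bound `‖F‖ (∑ ⟪T u j, u j⟫)^½ (∑ ⟪T v i, v i⟫)^½`. Applied to `T = M σ`,
bounded by arithmetic–geometric mean and integrated, it gives
`c (∑ ⟪(∫ M) u j, u j⟫ + ∑ ⟪(∫ M) v i, v i⟫) / 2 ≤ c ‖∫ M‖` for `u`, `v` in the unit ball.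
-/

open MeasureTheory Matrix
open scoped InnerProductSpace

section Matrix

variable {ι : Type*} [Fintype ι] [DecidableEq ι]

lemma Matrix.norm_entry_le_norm_toEuclideanCLM (A : Matrix ι ι ℂ) (i j : ι) :
    ‖A i j‖ ≤ ‖toEuclideanCLM (𝕜 := ℂ) A‖ := by
  have hentry : A i j = ⟪EuclideanSpace.single i 1,
      toEuclideanCLM (𝕜 := ℂ) A (EuclideanSpace.single j 1)⟫_ℂ := by
    simp [EuclideanSpace.inner_single_left, mulVec, dotProduct]
  calc ‖A i j‖ ≤ ‖EuclideanSpace.single i (1 : ℂ)‖ *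
        (‖toEuclideanCLM (𝕜 := ℂ) A‖ * ‖EuclideanSpace.single j (1 : ℂ)‖) := by
        rw [hentry]
        exact (norm_inner_le_norm _ _).trans (by gcongr; exact ContinuousLinearMap.le_opNorm _ _)
    _ = ‖toEuclideanCLM (𝕜 := ℂ) A‖ := by simp

variable {E : Type*} [NormedAddCommGroup E] [InnerProductSpace ℂ E]

lemma Matrix.norm_sum_mul_inner_le_of_finiteDimensional [FiniteDimensional ℂ E]
    (F : Matrix ι ι ℂ) (x y : ι → E) :
    ‖∑ i, ∑ j, F i j * ⟪x j, y i⟫_ℂ‖ ≤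
      ‖toEuclideanCLM (𝕜 := ℂ) F‖ * (√(∑ j, ‖x j‖ ^ 2) * √(∑ i, ‖y i‖ ^ 2)) := by
  let b := stdOrthonormalBasis ℂ E
  let coords (z : ι → E) (s : Fin (Module.finrank ℂ E)) : EuclideanSpace ℂ ι :=
    WithLp.toLp 2 fun j => ⟪z j, b s⟫_ℂ
  have hcoords (z : ι → E) : ∑ s, ‖coords z s‖ ^ 2 = ∑ j, ‖z j‖ ^ 2 := by
    simp_rw [EuclideanSpace.norm_sq_eq, coords]
    rw [Finset.sum_comm]
    exact Finset.sum_congr rfl fun j _ => b.sum_sq_norm_inner_left (z j)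
  have hsum : ∑ i, ∑ j, F i j * ⟪x j, y i⟫_ℂ =
      ∑ s, ⟪coords y s, toEuclideanCLM (𝕜 := ℂ) F (coords x s)⟫_ℂ := by
    simp_rw [← b.sum_inner_mul_inner (x _) (y _)]
    simp only [coords, PiLp.inner_apply, ofLp_toEuclideanCLM, mulVec, dotProduct,
      RCLike.inner_apply, inner_conj_symm, Finset.mul_sum, Finset.sum_mul, mul_assoc]
    exact (Finset.sum_congr rfl fun i _ => Finset.sum_comm).trans Finset.sum_comm
  calc ‖∑ i, ∑ j, F i j * ⟪x j, y i⟫_ℂ‖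
      ≤ ∑ s, ‖toEuclideanCLM (𝕜 := ℂ) F‖ * (‖coords x s‖ * ‖coords y s‖) := by
        rw [hsum]
        refine norm_sum_le_of_le _ fun s _ => (norm_inner_le_norm _ _).trans ?_
        calc ‖coords y s‖ * ‖toEuclideanCLM (𝕜 := ℂ) F (coords x s)‖
            ≤ ‖coords y s‖ * (‖toEuclideanCLM (𝕜 := ℂ) F‖ * ‖coords x s‖) := by
              gcongr; exact ContinuousLinearMap.le_opNorm _ _
          _ = _ := by ring
    _ = ‖toEuclideanCLM (𝕜 := ℂ) F‖ * ∑ s, ‖coords x s‖ * ‖coords y s‖ := by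
        rw [Finset.mul_sum]
    _ ≤ ‖toEuclideanCLM (𝕜 := ℂ) F‖ * (√(∑ j, ‖x j‖ ^ 2) * √(∑ i, ‖y i‖ ^ 2)) := by
        rw [← hcoords x, ← hcoords y]
        gcongr
        exact Real.sum_mul_le_sqrt_mul_sqrt _ _ _

lemma Matrix.norm_sum_mul_inner_le (F : Matrix ι ι ℂ) (x y : ι → E) :
    ‖∑ i, ∑ j, F i j * ⟪x j, y i⟫_ℂ‖ ≤
      ‖toEuclideanCLM (𝕜 := ℂ) F‖ * (√(∑ j, ‖x j‖ ^ 2) * √(∑ i, ‖y i‖ ^ 2)) := by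
  let S := Submodule.span ℂ (Set.range x ∪ Set.range y)
  have : FiniteDimensional ℂ S :=
    FiniteDimensional.span_of_finite ℂ ((Set.finite_range x).union (Set.finite_range y))
  exact F.norm_sum_mul_inner_le_of_finiteDimensional
    (fun j => (⟨x j, Submodule.subset_span (.inl ⟨j, rfl⟩)⟩ : S))
    (fun i => (⟨y i, Submodule.subset_span (.inr ⟨i, rfl⟩)⟩ : S))

end Matrix

section PositiveOperator

variable {ι : Type*} [Fintype ι]
variable {E : Type*} [NormedAddCommGroup E] [InnerProductSpace ℂ E]

lemma ContinuousLinearMap.IsPositive.norm_sum_mul_inner_le [CompleteSpace E] {T : E →L[ℂ] E}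
    (hT : T.IsPositive) [DecidableEq ι] (F : Matrix ι ι ℂ) (u v : ι → E) :
    ‖∑ i, ∑ j, F i j * ⟪T (u j), v i⟫_ℂ‖ ≤ ‖toEuclideanCLM (𝕜 := ℂ) F‖ *
      (√(∑ j, RCLike.re ⟪T (u j), u j⟫_ℂ) * √(∑ i, RCLike.re ⟪T (v i), v i⟫_ℂ)) := by
  obtain ⟨R, rfl⟩ := CStarAlgebra.nonneg_iff_eq_star_mul_self.mp (T.nonneg_iff_isPositive.mpr hT)
  have hinner (a b : E) : ⟪(star R * R) a, b⟫_ℂ = ⟪R a, R b⟫_ℂ := by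
    rw [star_eq_adjoint, mul_apply_eq_comp, adjoint_inner_left]
  have hre (a : E) : RCLike.re ⟪(star R * R) a, a⟫_ℂ = ‖R a‖ ^ 2 := by
    rw [hinner, inner_self_eq_norm_sq]
  simp_rw [hre, hinner]
  exact F.norm_sum_mul_inner_le _ _

lemma ContinuousLinearMap.sum_re_inner_apply_self_le (T : E →L[ℂ] E) (u : ι → E) :
    ∑ j, RCLike.re ⟪T (u j), u j⟫_ℂ ≤ ‖T‖ * ∑ j, ‖u j‖ ^ 2 := by
  rw [Finset.mul_sum]
  refine Finset.sum_le_sum fun j _ => (RCLike.re_le_norm _).trans ?_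
  calc ‖⟪T (u j), u j⟫_ℂ‖ ≤ ‖T (u j)‖ * ‖u j‖ := norm_inner_le_norm _ _
    _ ≤ ‖T‖ * ‖u j‖ * ‖u j‖ := by gcongr; exact T.le_opNorm _
    _ = ‖T‖ * ‖u j‖ ^ 2 := by ring

end PositiveOperator

section Integral

variable {α : Type*} [MeasurableSpace α] {μ : Measure α}
variable {H : Type*} [NormedAddCommGroup H] [InnerProductSpace ℂ H]
variable {ι : Type*} [Fintype ι] {M : α → H →L[ℂ] H}

lemma integrable_re_inner_apply_self (hM : Integrable M μ) (a : H) :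
    Integrable (fun σ => RCLike.re ⟪M σ a, a⟫_ℂ) μ :=
  ((hM.apply_continuousLinearMap a).inner_const a).re

variable [CompleteSpace H]

lemma integral_re_inner_apply_self (hM : Integrable M μ) (a : H) :
    ∫ σ, RCLike.re ⟪M σ a, a⟫_ℂ ∂μ = RCLike.re ⟪(∫ σ, M σ ∂μ) a, a⟫_ℂ := by
  have hMa := hM.apply_continuousLinearMap a
  simp_rw [← inner_re_symm a]
  rw [integral_re (hMa.const_inner a), integral_inner hMa, ContinuousLinearMap.integral_apply hM]

lemma norm_sum_integral_mul_inner_le [DecidableEq ι] (hM : Integrable M μ)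
    (hM_pos : ∀ᵐ σ ∂μ, (M σ).IsPositive) {F : α → Matrix ι ι ℂ}
    (hF : ∀ i j, AEStronglyMeasurable (fun σ => F σ i j) μ) {c : ℝ}
    (hc : ∀ᵐ σ ∂μ, ‖toEuclideanCLM (𝕜 := ℂ) (F σ)‖ ≤ c) (u v : ι → H) :
    ‖∑ i, ∑ j, ∫ σ, F σ i j * ⟪M σ (u j), v i⟫_ℂ ∂μ‖ ≤
      c * ((∑ j, RCLike.re ⟪(∫ σ, M σ ∂μ) (u j), u j⟫_ℂ +
        ∑ i, RCLike.re ⟪(∫ σ, M σ ∂μ) (v i), v i⟫_ℂ) / 2) := by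
  have hsum (z : ι → H) : Integrable (fun σ => ∑ j, RCLike.re ⟪M σ (z j), z j⟫_ℂ) μ :=
    integrable_finsetSum _ fun j _ => integrable_re_inner_apply_self hM (z j)
  have hentry (i j : ι) : Integrable (fun σ => F σ i j * ⟪M σ (u j), v i⟫_ℂ) μ :=
    ((hM.apply_continuousLinearMap (u j)).inner_const (v i)).bdd_mul (hF i j)
      (hc.mono fun σ hσ => (F σ).norm_entry_le_norm_toEuclideanCLM i j |>.trans hσ)
  have hbound : ∀ᵐ σ ∂μ, ‖∑ i, ∑ j, F σ i j * ⟪M σ (u j), v i⟫_ℂ‖ ≤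
      c * ((∑ j, RCLike.re ⟪M σ (u j), u j⟫_ℂ + ∑ i, RCLike.re ⟪M σ (v i), v i⟫_ℂ) / 2) := by
    filter_upwards [hM_pos, hc] with σ hpos hσ
    have ha := Finset.sum_nonneg fun j (_ : j ∈ Finset.univ) => hpos.re_inner_nonneg_left (u j)
    have hb := Finset.sum_nonneg fun i (_ : i ∈ Finset.univ) => hpos.re_inner_nonneg_left (v i)
    have hamgm := two_mul_le_add_sq (√(∑ j, RCLike.re ⟪M σ (u j), u j⟫_ℂ))
      (√(∑ i, RCLike.re ⟪M σ (v i), v i⟫_ℂ))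
    rw [Real.sq_sqrt ha, Real.sq_sqrt hb] at hamgm
    refine (hpos.norm_sum_mul_inner_le (F σ) u v).trans ?_
    exact (mul_le_mul_of_nonneg_left (by linarith) (norm_nonneg _)).trans
      (mul_le_mul_of_nonneg_right hσ (by linarith))
  calc ‖∑ i, ∑ j, ∫ σ, F σ i j * ⟪M σ (u j), v i⟫_ℂ ∂μ‖
      = ‖∫ σ, ∑ i, ∑ j, F σ i j * ⟪M σ (u j), v i⟫_ℂ ∂μ‖ := by
        rw [integral_finsetSum _ fun i _ => integrable_finsetSum _ fun j _ => hentry i j]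
        simp_rw [integral_finsetSum _ fun j _ => hentry _ j]
    _ ≤ ∫ σ, c * ((∑ j, RCLike.re ⟪M σ (u j), u j⟫_ℂ +
          ∑ i, RCLike.re ⟪M σ (v i), v i⟫_ℂ) / 2) ∂μ :=
        norm_integral_le_of_norm_le (((hsum u).add (hsum v)).div_const 2 |>.const_mul c) hbound
    _ = _ := by
        rw [integral_const_mul, integral_div, integral_add (hsum u) (hsum v),
          integral_finsetSum _ fun j _ => integrable_re_inner_apply_self hM (u j),
          integral_finsetSum _ fun i _ => integrable_re_inner_apply_self hM (v i)]
        simp_rw [integral_re_inner_apply_self hM]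

lemma norm_sum_integral_mul_inner_le_mul_norm_integral [DecidableEq ι] (hM : Integrable M μ)
    (hM_pos : ∀ᵐ σ ∂μ, (M σ).IsPositive) {F : α → Matrix ι ι ℂ}
    (hF : ∀ i j, AEStronglyMeasurable (fun σ => F σ i j) μ) {c : ℝ}
    (hc : ∀ᵐ σ ∂μ, ‖toEuclideanCLM (𝕜 := ℂ) (F σ)‖ ≤ c) {u v : ι → H}
    (hu : ∑ j, ‖u j‖ ^ 2 ≤ 1) (hv : ∑ i, ‖v i‖ ^ 2 ≤ 1) :
    ‖∑ i, ∑ j, ∫ σ, F σ i j * ⟪M σ (u j), v i⟫_ℂ ∂μ‖ ≤ c * ‖∫ σ, M σ ∂μ‖ := by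
  rcases eq_or_ne μ 0 with rfl | hμ
  · simp
  have hc0 : 0 ≤ c := by
    have := ae_neBot.2 hμ
    obtain ⟨σ, hσ⟩ := hc.exists
    exact (norm_nonneg _).trans hσ
  refine (norm_sum_integral_mul_inner_le hM hM_pos hF hc u v).trans
    (mul_le_mul_of_nonneg_left ?_ hc0)
  set T := ∫ σ, M σ ∂μ
  have hTu := (T.sum_re_inner_apply_self_le u).trans (mul_le_of_le_one_right (norm_nonneg T) hu)
  have hTv := (T.sum_re_inner_apply_self_le v).trans (mul_le_of_le_one_right (norm_nonneg T) hv)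
  linarith

end Integral

/-- Lemma 1 (`pp`): if `dm = w·dn` is a complex measure with `|dm| ≤ dn` (`‖w‖ ≤ 1`),
`n` finite positive, and `M : E → L(H)` is a bounded continuous function with positive
self-adjoint values, then the map `f ↦ ∫_E f M dm` is completely bounded with cb-norm
at most `‖∫_E M dn‖`: for every `k`, every `k×k` matrix `(f i j)` of bounded measurable
functions whose pointwise operator norm on `E` is at most `c`, and all unit vectors
`u, v` of `H^k`, the matrix element of the block operator `(∫ f i j M dm)_{ij}` is
bounded by `c·‖∫_E M dn‖`. -/
theorem stmt_11 {H : Type*} [NormedAddCommGroup H] [InnerProductSpace ℂ H]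
    [CompleteSpace H] (E : Set ℂ) (hE : MeasurableSet E)
    (n : Measure ℂ) [IsFiniteMeasure n]
    (w : ℂ → ℂ) (hw_meas : Measurable w) (hw : ∀ σ, ‖w σ‖ ≤ 1)
    (M : ℂ → H →L[ℂ] H) (hM_cont : ContinuousOn M E)
    (hM_bdd : ∃ C, ∀ σ ∈ E, ‖M σ‖ ≤ C)
    (hM_pos : ∀ σ ∈ E, (M σ).IsPositive)
    (k : ℕ) (f : Fin k → Fin k → ℂ → ℂ) (hf : ∀ i j, Measurable (f i j))
    (c : ℝ)
    (hc : ∀ σ ∈ E,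
      ‖Matrix.toEuclideanCLM (𝕜 := ℂ) (Matrix.of fun i j => f i j σ)‖ ≤ c)
    (u v : Fin k → H) (hu : ∑ i, ‖u i‖ ^ 2 ≤ 1) (hv : ∑ i, ‖v i‖ ^ 2 ≤ 1) :
    ‖∑ i, ∑ j, ∫ σ in E, (f i j σ * w σ) * (inner ℂ (M σ (u j)) (v i) : ℂ) ∂n‖ ≤
      c * ‖∫ σ in E, M σ ∂n‖ := by
  obtain ⟨C, hC⟩ := hM_bdd
  have hM_int : IntegrableOn M E n :=
    Integrable.mono' (integrable_const C) (hM_cont.aestronglyMeasurable hE)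
      (ae_restrict_of_forall_mem hE hC)
  have hF_le : ∀ σ ∈ E,
      ‖toEuclideanCLM (𝕜 := ℂ) (Matrix.of fun i j => f i j σ * w σ)‖ ≤ c := by
    intro σ hσ
    have hsmul : (Matrix.of fun i j => f i j σ * w σ) = w σ • Matrix.of fun i j => f i j σ := by
      ext i j; simp [mul_comm]
    rw [hsmul, map_smul, norm_smul]
    exact (mul_le_of_le_one_left (norm_nonneg _) (hw σ)).trans (hc σ hσ)
  exact norm_sum_integral_mul_inner_le_mul_norm_integral hM_int
    (ae_restrict_of_forall_mem hE hM_pos)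
    (fun i j => ((hf i j).mul hw_meas).aestronglyMeasurable)
    (ae_restrict_of_forall_mem hE hF_le) hu hv
end

section
/- For z = 1/w with w ≠ 0, an operator A with spectrum avoiding 0, ω ∈ ℂ, r > 0 with |ω|² ≠ r², set o = ω̄/(|ω|²-r²), ρ = r/(|ω|²-r²), B = A^{-1}, ζ = 1/z. Then the operator-valued functions ν(z, A, D) = (1/2πi)(A* - ω̄)((z-ω)(A* - ω̄) - r²)^{-1} satisfy, whenever both sides are defined, 2πi·ν(ζ, B, Δ) = z - 2πi·z²·ν(z, A, D), where Δ is the disk with center o and radius ρ. Consequently, for two disks D_j, D_k, (ν(z,A,D_j) - ν(z,A,D_k)) dz = (ν(ζ,B,Δ_j) - ν(ζ,B,Δ_k)) dζ under ζ = 1/z, dζ = -z^{-2} dz. -/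
/-!
Put `s = b a - c`. For the inverted parameters `(b/s, a/s, c/s²)` the denominator at `z⁻¹, C⁻¹`
factors as `(z s)⁻¹ M C⁻¹`, where `M` is the denominator at `z, C`, while
`C⁻¹ - a/s = s⁻¹ (s - a C) C⁻¹`. So the inverted kernel is `z (s - a C) M⁻¹`, and
`z (s - a C) = z M - z² (C - b)`. Only right multiplication by `C⁻¹` occurs, so nothing needs to
commute. For the disk `|w - ω| ≤ r` and `C = A*` one has `a = ω`, `b = ω̄`, `c = r²`,
`s = |ω|² - r²`, and the inverted parameters are those of the image disk.
-/

open Real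

section ResidualKernel

variable {𝕜 R : Type*} [Field 𝕜] [Ring R] [Algebra 𝕜 R]

noncomputable def residualDenom (w : 𝕜) (C : R) (a b c : 𝕜) : R :=
  (w - a) • (C - b • 1) - c • 1

/-- `2πi ν(w, T, D)` for the disk `D = {|z - ω| ≤ r}` is
`residualKernel w (star T) ω (conj ω) r²`. -/
noncomputable def residualKernel (w : 𝕜) (C : R) (a b c : 𝕜) : R :=
  (C - b • 1) * Ring.inverse (residualDenom w C a b c)

variable {C : R} {a b c s : 𝕜}

lemma inverse_sub_smul_one_eq_smul_mul (hC : IsUnit C) (hs : s ≠ 0) :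
    Ring.inverse C - (a / s) • 1 = s⁻¹ • ((s • 1 - a • C) * Ring.inverse C) := by
  rw [sub_mul, smul_mul_assoc, smul_mul_assoc, one_mul, Ring.mul_inverse_cancel C hC]
  match_scalars <;> field_simp

lemma residualDenom_inv_inverse {z : 𝕜} (hC : IsUnit C) (hz : z ≠ 0) (hs : b * a - c ≠ 0) :
    residualDenom z⁻¹ (Ring.inverse C) (b / (b * a - c)) (a / (b * a - c)) (c / (b * a - c) ^ 2) =
      (z * (b * a - c))⁻¹ • (residualDenom z C a b c * Ring.inverse C) := by
  unfold residualDenom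
  simp only [sub_mul, smul_mul_assoc, one_mul, Ring.mul_inverse_cancel C hC]
  match_scalars <;> field_simp <;> ring

lemma smul_residualDenom_sub (z : 𝕜) :
    z • residualDenom z C a b c - z ^ 2 • (C - b • 1) = z • ((b * a - c) • 1 - a • C) := by
  unfold residualDenom
  module

theorem residualKernel_inv_inverse {z : 𝕜} (hC : IsUnit C) (hz : z ≠ 0) (hs : b * a - c ≠ 0)
    (hM : IsUnit (residualDenom z C a b c)) :
    residualKernel z⁻¹ (Ring.inverse C) (b / (b * a - c)) (a / (b * a - c)) (c / (b * a - c) ^ 2) =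
      z • 1 - z ^ 2 • residualKernel z C a b c := by
  set s := b * a - c
  set M := residualDenom z C a b c
  set N := residualDenom z⁻¹ (Ring.inverse C) (b / s) (a / s) (c / s ^ 2)
  have hN : N = (z * s)⁻¹ • (M * Ring.inverse C) := residualDenom_inv_inverse hC hz hs
  have hNunit : IsUnit N := by
    rw [hN, Algebra.smul_def]
    exact ((isUnit_iff_ne_zero.2 (inv_ne_zero (mul_ne_zero hz hs))).map _).mul
      (hM.mul hC.ringInverse)
  have hP : Ring.inverse C - (a / s) • 1 = z • ((s • 1 - a • C) * Ring.inverse M) * N := by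
    rw [inverse_sub_smul_one_eq_smul_mul hC hs, hN, smul_mul_smul_comm, mul_assoc,
      ← mul_assoc _ M, Ring.inverse_mul_cancel M hM, one_mul]
    congr 1
    field_simp
  calc residualKernel z⁻¹ (Ring.inverse C) (b / s) (a / s) (c / s ^ 2)
      = (Ring.inverse C - (a / s) • 1) * Ring.inverse N := rfl
    _ = z • ((s • 1 - a • C) * Ring.inverse M) := by
      rw [hP, mul_assoc, Ring.mul_inverse_cancel N hNunit, mul_one]
    _ = (z • M - z ^ 2 • (C - b • 1)) * Ring.inverse M := by
      rw [smul_residualDenom_sub, smul_mul_assoc]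
    _ = z • 1 - z ^ 2 • residualKernel z C a b c := by
      rw [sub_mul, smul_mul_assoc, smul_mul_assoc, Ring.mul_inverse_cancel M hM]
      rfl

end ResidualKernel

open ComplexConjugate

theorem residualKernel_star_inverse {R : Type*} [Ring R] [StarRing R] [Algebra ℂ R] {A : R}
    (hA : IsUnit A) {z : ℂ} (hz : z ≠ 0) {ω : ℂ} {r : ℝ} (h : ‖ω‖ ^ 2 ≠ r ^ 2)
    (hu : IsUnit (residualDenom z (star A) ω (conj ω) ((r ^ 2 : ℝ) : ℂ))) :
    residualKernel z⁻¹ (star (Ring.inverse A)) (conj ω / ((‖ω‖ ^ 2 - r ^ 2 : ℝ) : ℂ))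
        (conj (conj ω / ((‖ω‖ ^ 2 - r ^ 2 : ℝ) : ℂ))) (((r / (‖ω‖ ^ 2 - r ^ 2)) ^ 2 : ℝ) : ℂ) =
      z • 1 - z ^ 2 • residualKernel z (star A) ω (conj ω) ((r ^ 2 : ℝ) : ℂ) := by
  have hs : ((‖ω‖ ^ 2 - r ^ 2 : ℝ) : ℂ) = conj ω * ω - ((r ^ 2 : ℝ) : ℂ) := by
    push_cast
    rw [Complex.conj_mul']
  have hs0 : conj ω * ω - ((r ^ 2 : ℝ) : ℂ) ≠ 0 := by
    rw [← hs]
    exact Complex.ofReal_ne_zero.2 (sub_ne_zero.2 h)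
  have hρ : (((r / (‖ω‖ ^ 2 - r ^ 2)) ^ 2 : ℝ) : ℂ) =
      ((r ^ 2 : ℝ) : ℂ) / ((‖ω‖ ^ 2 - r ^ 2 : ℝ) : ℂ) ^ 2 := by
    push_cast [div_pow]
    rfl
  rw [← Ring.inverse_star, hρ, map_div₀, Complex.conj_conj, Complex.conj_ofReal, hs]
  exact residualKernel_inv_inverse hA.star hz hs0 hu

theorem stmt_19_general {H : Type*} [NormedAddCommGroup H] [InnerProductSpace ℂ H]
    [CompleteSpace H] (A : H →L[ℂ] H) (hA : IsUnit A)
    (z : ℂ) (hz : z ≠ 0) (ω₁ ω₂ : ℂ) (r₁ r₂ : ℝ)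
    (h₁ : ‖ω₁‖ ^ 2 ≠ r₁ ^ 2) (h₂ : ‖ω₂‖ ^ 2 ≠ r₂ ^ 2) :
    let ν : ℂ → (H →L[ℂ] H) → ℂ → ℝ → (H →L[ℂ] H) := fun w T ω r =>
      (2 * (π : ℂ) * Complex.I)⁻¹ •
        ((star T - (starRingEnd ℂ ω) • 1) *
          Ring.inverse ((w - ω) • (star T - (starRingEnd ℂ ω) • (1 : H →L[ℂ] H)) -
            ((r ^ 2 : ℝ) : ℂ) • 1))
    let B : H →L[ℂ] H := Ring.inverse A
    let ζ : ℂ := z⁻¹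
    let o₁ : ℂ := (starRingEnd ℂ ω₁) / ((‖ω₁‖ ^ 2 - r₁ ^ 2 : ℝ) : ℂ)
    let o₂ : ℂ := (starRingEnd ℂ ω₂) / ((‖ω₂‖ ^ 2 - r₂ ^ 2 : ℝ) : ℂ)
    let ρ₁ : ℝ := r₁ / (‖ω₁‖ ^ 2 - r₁ ^ 2)
    let ρ₂ : ℝ := r₂ / (‖ω₂‖ ^ 2 - r₂ ^ 2)
    ∀ _hu₁ : IsUnit ((z - ω₁) • (star A - (starRingEnd ℂ ω₁) • (1 : H →L[ℂ] H)) -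
        ((r₁ ^ 2 : ℝ) : ℂ) • 1),
    ∀ _hu₂ : IsUnit ((z - ω₂) • (star A - (starRingEnd ℂ ω₂) • (1 : H →L[ℂ] H)) -
        ((r₂ ^ 2 : ℝ) : ℂ) • 1),
    ∀ _hv₁ : IsUnit ((ζ - o₁) • (star B - (starRingEnd ℂ o₁) • (1 : H →L[ℂ] H)) -
        ((ρ₁ ^ 2 : ℝ) : ℂ) • 1),
    ∀ _hv₂ : IsUnit ((ζ - o₂) • (star B - (starRingEnd ℂ o₂) • (1 : H →L[ℂ] H)) -
        ((ρ₂ ^ 2 : ℝ) : ℂ) • 1),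
      (2 * (π : ℂ) * Complex.I) • ν ζ B o₁ ρ₁ =
          z • (1 : H →L[ℂ] H) - (2 * (π : ℂ) * Complex.I * z ^ 2) • ν z A ω₁ r₁ ∧
        ν z A ω₁ r₁ - ν z A ω₂ r₂ =
          (-(z ^ 2)⁻¹) • (ν ζ B o₁ ρ₁ - ν ζ B o₂ ρ₂) := by
  intro ν B ζ o₁ o₂ ρ₁ ρ₂ hu₁ hu₂ _ _
  have hπ : 2 * (π : ℂ) * Complex.I ≠ 0 := by simp [Complex.I_ne_zero]
  have e₁ : residualKernel ζ (star B) o₁ (conj o₁) ((ρ₁ ^ 2 : ℝ) : ℂ) =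
      z • 1 - z ^ 2 • residualKernel z (star A) ω₁ (conj ω₁) ((r₁ ^ 2 : ℝ) : ℂ) :=
    residualKernel_star_inverse hA hz h₁ hu₁
  have e₂ : residualKernel ζ (star B) o₂ (conj o₂) ((ρ₂ ^ 2 : ℝ) : ℂ) =
      z • 1 - z ^ 2 • residualKernel z (star A) ω₂ (conj ω₂) ((r₂ ^ 2 : ℝ) : ℂ) :=
    residualKernel_star_inverse hA hz h₂ hu₂
  have hν : ∀ w T ω r, ν w T ω r =
      (2 * (π : ℂ) * Complex.I)⁻¹ • residualKernel w (star T) ω (conj ω) ((r ^ 2 : ℝ) : ℂ) :=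
    fun _ _ _ _ => rfl
  simp only [hν, e₁, e₂]
  constructor <;> match_scalars <;> field_simp
  simp

/-- Möbius invariance of the residual kernel under the inversion `z ↦ 1/z`
(Lemma `homo`): with `ν(w, T, ω, r) = (1/2πi)(T* - ω̄)((w-ω)(T* - ω̄) - r²)⁻¹`,
`B = A⁻¹`, `ζ = 1/z`, `o = ω̄/(|ω|² - r²)`, `ρ = r/(|ω|² - r²)`, one has
`2πi·ν(ζ, B, Δ) = z - 2πi·z²·ν(z, A, D)` whenever both sides are defined, and
consequently, for two disks,
`(ν(z,A,D₁) - ν(z,A,D₂)) dz = (ν(ζ,B,Δ₁) - ν(ζ,B,Δ₂)) dζ` with `dζ = -z⁻² dz`. -/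
theorem stmt_19 {H : Type*} [NormedAddCommGroup H] [InnerProductSpace ℂ H]
    [CompleteSpace H] (A : H →L[ℂ] H) (hA : IsUnit A) (hA0 : (0 : ℂ) ∉ spectrum ℂ A)
    (z : ℂ) (hz : z ≠ 0) (ω₁ ω₂ : ℂ) (r₁ r₂ : ℝ)
    (h₁ : ‖ω₁‖ ^ 2 ≠ r₁ ^ 2) (h₂ : ‖ω₂‖ ^ 2 ≠ r₂ ^ 2) :
    let ν : ℂ → (H →L[ℂ] H) → ℂ → ℝ → (H →L[ℂ] H) := fun w T ω r =>
      (2 * (π : ℂ) * Complex.I)⁻¹ •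
        ((star T - (starRingEnd ℂ ω) • 1) *
          Ring.inverse ((w - ω) • (star T - (starRingEnd ℂ ω) • (1 : H →L[ℂ] H)) -
            ((r ^ 2 : ℝ) : ℂ) • 1))
    let B : H →L[ℂ] H := Ring.inverse A
    let ζ : ℂ := z⁻¹
    let o₁ : ℂ := (starRingEnd ℂ ω₁) / ((‖ω₁‖ ^ 2 - r₁ ^ 2 : ℝ) : ℂ)
    let o₂ : ℂ := (starRingEnd ℂ ω₂) / ((‖ω₂‖ ^ 2 - r₂ ^ 2 : ℝ) : ℂ)
    let ρ₁ : ℝ := r₁ / (‖ω₁‖ ^ 2 - r₁ ^ 2)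
    let ρ₂ : ℝ := r₂ / (‖ω₂‖ ^ 2 - r₂ ^ 2)
    ∀ _hu₁ : IsUnit ((z - ω₁) • (star A - (starRingEnd ℂ ω₁) • (1 : H →L[ℂ] H)) -
        ((r₁ ^ 2 : ℝ) : ℂ) • 1),
    ∀ _hu₂ : IsUnit ((z - ω₂) • (star A - (starRingEnd ℂ ω₂) • (1 : H →L[ℂ] H)) -
        ((r₂ ^ 2 : ℝ) : ℂ) • 1),
    ∀ _hv₁ : IsUnit ((ζ - o₁) • (star B - (starRingEnd ℂ o₁) • (1 : H →L[ℂ] H)) -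
        ((ρ₁ ^ 2 : ℝ) : ℂ) • 1),
    ∀ _hv₂ : IsUnit ((ζ - o₂) • (star B - (starRingEnd ℂ o₂) • (1 : H →L[ℂ] H)) -
        ((ρ₂ ^ 2 : ℝ) : ℂ) • 1),
      (2 * (π : ℂ) * Complex.I) • ν ζ B o₁ ρ₁ =
          z • (1 : H →L[ℂ] H) - (2 * (π : ℂ) * Complex.I * z ^ 2) • ν z A ω₁ r₁ ∧
        ν z A ω₁ r₁ - ν z A ω₂ r₂ =
          (-(z ^ 2)⁻¹) • (ν ζ B o₁ ρ₁ - ν ζ B o₂ ρ₂) :=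
  stmt_19_general A hA z hz ω₁ ω₂ r₁ r₂ h₁ h₂
end
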